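/- Let G₄ = g^{⊗6} be a neutral IIA GSWF on n voters and 4 alternatives, and let G₃ = g^{⊗3} be its restriction to any 3 alternatives. Then GCW(G₄) = 2·GCW(G₃) − 1, where GCW(H) denotes the probability over a uniform profile that H has a Generalized Condorcet Winner. -/

import Mathlib

open Finset
open scoped Classical

/-- A linear order on `m` alternatives, represented by its ranking permutation:
`σ a` is the rank of alternative `a` (rank `0` is most preferred). -/
abbrev OrderM (m : ℕ) := Equiv.Perm (Fin m)

/-- A profile of `n` voters on `m` alternatives. -/
abbrev ProfileM (n m : ℕ) := Fin n → OrderM m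

/-- Voter with ranking `σ` prefers alternative `a` over alternative `b`. -/
def PrefersM (m : ℕ) (σ : OrderM m) (a b : Fin m) : Prop := σ a < σ b

/-- The column `x^{a,b} ∈ {0,1}ⁿ` of individual preferences between `a` and `b`. -/
noncomputable def colM (n m : ℕ) (x : ProfileM n m) (a b : Fin m) : Fin n → Bool :=
  fun i => decide (PrefersM m (x i) a b)

/-- `GCW(g^{⊗C(m,2)})`: the probability that a uniform profile on `m` alternatives has a
Generalized Condorcet Winner under the neutral IIA GSWF determined by `g`. -/
noncomputable def GCWprob (n m : ℕ) (g : (Fin n → Bool) → Bool) : ℝ :=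
  ((univ.filter (fun x : ProfileM n m =>
      ∃ a : Fin m, ∀ b : Fin m, b ≠ a → g (colM n m x a b) = true)).card : ℝ) /
  (Fintype.card (ProfileM n m) : ℝ)

/-!
Oddness of `g` allows at most one winner per profile, and relabelling the alternatives
(neutrality) shows that each of them wins with the same probability, so
`GCW(G_m) = m · P(alternative 0 beats all others)`.

On four alternatives let `X_j` indicate that `0` beats `j`. Reversing every ranking exchanges
"beats" and "is beaten", so `E[X_j] = 1/2` and `E[X₁X₂X₃] = E[(1-X₁)(1-X₂)(1-X₃)]`; expanding
gives `2 E[X₁X₂X₃] = 1 - 3/2 + Σ_{j<k} E[X_j X_k]`. Restricting a uniform profile to three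
alternatives gives a uniform profile, so each `E[X_j X_k]` equals `GCW(G₃)/3`.
-/

open Function
open scoped BigOperators

section Columns

variable {n m : ℕ}

lemma colM_mul_perm (x : ProfileM n m) (σ : Equiv.Perm (Fin m)) (a b : Fin m) :
    colM n m (fun i => x i * σ) a b = colM n m x (σ a) (σ b) := rfl

lemma colM_revPerm_mul (x : ProfileM n m) (a b : Fin m) :
    colM n m (fun i => Fin.revPerm * x i) a b = colM n m x b a := by
  funext i
  exact decide_eq_decide.mpr Fin.rev_lt_rev

lemma colM_comm (x : ProfileM n m) {a b : Fin m} (hab : a ≠ b) :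
    colM n m x b a = fun i => !colM n m x a b i := by
  funext i
  have hne : x i a ≠ x i b := (x i).injective.ne hab
  rcases hne.lt_or_gt with h | h <;> simp [colM, PrefersM, h, h.not_gt]

lemma expect_relabel (σ : Equiv.Perm (Fin m)) (f : ProfileM n m → ℝ) :
    𝔼 x : ProfileM n m, f (fun i => x i * σ) = 𝔼 x, f x :=
  Fintype.expect_equiv (Equiv.piCongrRight fun _ => Equiv.mulRight σ) _ _ fun _ => rfl

lemma expect_reverse (f : ProfileM n m → ℝ) :
    𝔼 x : ProfileM n m, f (fun i => Fin.revPerm * x i) = 𝔼 x, f x :=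
  Fintype.expect_equiv (Equiv.piCongrRight fun _ => Equiv.mulLeft Fin.revPerm) _ _ fun _ => rfl

lemma expect_colM_comp_injective {k : ℕ} (F : (Fin k → Fin k → Fin n → Bool) → ℝ)
    {e e' : Fin k → Fin m} (he : Injective e) (he' : Injective e') :
    𝔼 x, F (fun a b => colM n m x (e a) (e b)) = 𝔼 x, F (fun a b => colM n m x (e' a) (e' b)) := by
  obtain ⟨σ, hσ⟩ := Equiv.Perm.exists_extending_pair e e' he he'
  rw [← expect_relabel σ]
  simp only [colM_mul_perm, hσ]

end Columns

section Restriction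

variable {n m : ℕ}

/-- The ranking on `m + 1` alternatives that puts the new alternative `Fin.last m` at rank `k`
and orders the others as `τ` does. -/
def insertRank (k : Fin (m + 1)) (τ : Equiv.Perm (Fin m)) : Equiv.Perm (Fin (m + 1)) :=
  (finSuccEquivLast.trans (Equiv.optionCongr τ)).trans (finSuccEquiv' k).symm

lemma insertRank_castSucc (k : Fin (m + 1)) (τ : Equiv.Perm (Fin m)) (a : Fin m) :
    insertRank k τ a.castSucc = k.succAbove (τ a) := by
  simp [insertRank]

lemma insertRank_last (k : Fin (m + 1)) (τ : Equiv.Perm (Fin m)) :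
    insertRank k τ (Fin.last m) = k := by
  simp [insertRank]

lemma insertRank_bijective :
    Bijective fun p : Fin (m + 1) × Equiv.Perm (Fin m) => insertRank p.1 p.2 := by
  rw [Fintype.bijective_iff_injective_and_card]
  refine ⟨?_, by simp [Fintype.card_perm, Nat.factorial_succ]⟩
  rintro ⟨k, τ⟩ ⟨k', τ'⟩ h
  have hk : k = k' := by simpa [insertRank_last] using DFunLike.congr_fun h (Fin.last m)
  subst hk
  have hτ : τ = τ' := Equiv.ext fun a => by
    simpa [insertRank_castSucc] using DFunLike.congr_fun h a.castSucc
  rw [hτ]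

noncomputable def insertRankEquiv : (Fin n → Fin (m + 1)) × ProfileM n m ≃ ProfileM n (m + 1) :=
  (Equiv.arrowProdEquivProdArrow _ _ _).symm.trans
    (Equiv.piCongrRight fun _ => Equiv.ofBijective _ insertRank_bijective)

lemma colM_insertRankEquiv (p : (Fin n → Fin (m + 1)) × ProfileM n m) (a b : Fin m) :
    colM n (m + 1) (insertRankEquiv p) a.castSucc b.castSucc = colM n m p.2 a b := by
  funext i
  exact decide_eq_decide.mpr <| by
    simp [insertRankEquiv, insertRank_castSucc, PrefersM, Fin.succAbove_lt_succAbove_iff]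

/-- A uniform profile on `m + 1` alternatives is a uniform profile on the first `m` together with
independent uniform ranks for the last one, so its restriction to the first `m` is uniform. -/
lemma expect_colM_castSucc (F : (Fin m → Fin m → Fin n → Bool) → ℝ) :
    𝔼 x : ProfileM n (m + 1), F (fun a b => colM n (m + 1) x a.castSucc b.castSucc)
      = 𝔼 y, F (colM n m y) := by
  rw [← Fintype.expect_equiv insertRankEquiv (fun p => F (colM n m p.2)) _
    fun p => by simp only [colM_insertRankEquiv]]
  rw [← Finset.univ_product_univ, Finset.expect_product]
  simp

lemma expect_colM_comp_injective_succ (F : (Fin m → Fin m → Fin n → Bool) → ℝ)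
    {e : Fin m → Fin (m + 1)} (he : Injective e) :
    𝔼 x, F (fun a b => colM n (m + 1) x (e a) (e b)) = 𝔼 y, F (colM n m y) := by
  rw [expect_colM_comp_injective F he (Fin.castSucc_injective m), expect_colM_castSucc]

end Restriction

section Winner

variable {n m : ℕ} (g : (Fin n → Bool) → Bool)

def IsGCW (x : ProfileM n m) (a : Fin m) : Prop :=
  ∀ b, b ≠ a → g (colM n m x a b) = true

lemma IsGCW.unique (hodd : ∀ z : Fin n → Bool, g (fun i => !z i) = !g z)
    {x : ProfileM n m} {a c : Fin m} (ha : IsGCW g x a) (hc : IsGCW g x c) : a = c := by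
  by_contra hac
  have := hc a hac
  rw [colM_comm x hac, hodd, ha c (Ne.symm hac)] at this
  exact Bool.false_ne_true this

lemma isGCW_mul_perm (x : ProfileM n m) (σ : Equiv.Perm (Fin m)) (a : Fin m) :
    IsGCW g (fun i => x i * σ) a ↔ IsGCW g x (σ a) := by
  simp only [IsGCW, colM_mul_perm]
  rw [σ.forall_congr_left]
  simp [Equiv.symm_apply_eq]

lemma GCWprob_eq_expect :
    GCWprob n m g = 𝔼 x : ProfileM n m, if ∃ a, IsGCW g x a then 1 else 0 := by
  rw [GCWprob, Fintype.expect_eq_sum_div_card, Finset.sum_boole]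
  congr

lemma expect_isGCW_eq (a c : Fin m) :
    𝔼 x : ProfileM n m, (if IsGCW g x a then 1 else 0 : ℝ)
      = 𝔼 x : ProfileM n m, if IsGCW g x c then 1 else 0 := by
  rw [← expect_relabel (Equiv.swap c a)]
  simp only [isGCW_mul_perm, Equiv.swap_apply_right]

lemma GCWprob_eq_mul_expect_isGCW (hodd : ∀ z : Fin n → Bool, g (fun i => !z i) = !g z)
    (a : Fin m) :
    GCWprob n m g = m * 𝔼 x : ProfileM n m, if IsGCW g x a then 1 else 0 := by
  have hsum (x : ProfileM n m) :
      (if ∃ c, IsGCW g x c then 1 else 0 : ℝ) = ∑ c, if IsGCW g x c then 1 else 0 := by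
    by_cases h : ∃ c, IsGCW g x c
    · obtain ⟨c, hc⟩ := h
      rw [if_pos ⟨c, hc⟩, Finset.sum_eq_single c (fun b _ hbc => if_neg fun hb => hbc
        (hb.unique g hodd hc)) (by simp), if_pos hc]
    · push Not at h
      simp [h]
  rw [GCWprob_eq_expect, Finset.expect_congr rfl fun x _ => hsum x, Finset.expect_sum_comm]
  simp only [expect_isGCW_eq g _ a, Finset.sum_const, Finset.card_univ, Fintype.card_fin,
    nsmul_eq_mul]

end Winner

section Oddness

variable {n m : ℕ} {g : (Fin n → Bool) → Bool}

lemma g_colM_comm (hodd : ∀ z : Fin n → Bool, g (fun i => !z i) = !g z) (x : ProfileM n m)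
    {a b : Fin m} (hab : a ≠ b) : g (colM n m x b a) = !g (colM n m x a b) := by
  rw [colM_comm x hab, hodd]

lemma expect_beats_eq_half (hodd : ∀ z : Fin n → Bool, g (fun i => !z i) = !g z)
    {a b : Fin m} (hab : a ≠ b) :
    𝔼 x : ProfileM n m, (if g (colM n m x a b) = true then 1 else 0 : ℝ) = 1 / 2 := by
  have hrev :=
    expect_reverse fun x : ProfileM n m => (if g (colM n m x a b) = true then 1 else 0 : ℝ)
  simp only [colM_revPerm_mul, g_colM_comm hodd _ hab, Bool.not_eq_true'] at hrev
  have hcompl (x : ProfileM n m) : (if g (colM n m x a b) = false then 1 else 0 : ℝ)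
      = 1 - if g (colM n m x a b) = true then 1 else 0 := by
    cases g (colM n m x a b) <;> simp
  rw [Finset.expect_congr rfl fun x _ => hcompl x, Finset.expect_sub_distrib,
    Fintype.expect_const] at hrev
  linarith

lemma expect_isGCL_eq_expect_isGCW (hodd : ∀ z : Fin n → Bool, g (fun i => !z i) = !g z)
    (a : Fin m) :
    𝔼 x : ProfileM n m, (if ∀ b, b ≠ a → g (colM n m x a b) = false then 1 else 0 : ℝ)
      = 𝔼 x : ProfileM n m, if IsGCW g x a then 1 else 0 := by
  rw [← expect_reverse fun x : ProfileM n m => if IsGCW g x a then (1 : ℝ) else 0]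
  refine Finset.expect_congr rfl fun x _ => if_congr ?_ rfl rfl
  refine forall₂_congr fun b hb => ?_
  rw [colM_revPerm_mul, g_colM_comm hodd x (Ne.symm hb), Bool.not_eq_true']

end Oddness

/-- Expectation of the indicator identity `XYZ + (1-X)(1-Y)(1-Z) = 1 - (X+Y+Z) + (XY+XZ+YZ)`. -/
lemma expect_ite_and_three {ι : Type*} [Fintype ι] [Nonempty ι] (p q r : ι → Bool) :
    𝔼 i, (if p i ∧ q i ∧ r i then 1 else 0 : ℝ)
      + 𝔼 i, (if p i = false ∧ q i = false ∧ r i = false then 1 else 0 : ℝ)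
      = 1 - (𝔼 i, (if p i then 1 else 0 : ℝ) + 𝔼 i, (if q i then 1 else 0 : ℝ)
          + 𝔼 i, (if r i then 1 else 0 : ℝ))
        + (𝔼 i, (if p i ∧ q i then 1 else 0 : ℝ) + 𝔼 i, (if p i ∧ r i then 1 else 0 : ℝ)
          + 𝔼 i, (if q i ∧ r i then 1 else 0 : ℝ)) := by
  have hpoint (i : ι) : (if p i ∧ q i ∧ r i then 1 else 0 : ℝ)
      + (if p i = false ∧ q i = false ∧ r i = false then 1 else 0)
      = 1 - ((if p i then 1 else 0) + (if q i then 1 else 0) + (if r i then 1 else 0))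
        + ((if p i ∧ q i then 1 else 0) + (if p i ∧ r i then 1 else 0)
          + (if q i ∧ r i then 1 else 0)) := by
    cases p i <;> cases q i <;> cases r i <;> norm_num
  rw [← Finset.expect_add_distrib, Finset.expect_congr rfl fun i _ => hpoint i]
  simp only [Finset.expect_add_distrib, Finset.expect_sub_distrib, Fintype.expect_const]

/-- For a neutral IIA GSWF `G₄ = g^{⊗6}` on four alternatives (so `g` is odd) with
restriction `G₃ = g^{⊗3}` to three alternatives, `GCW(G₄) = 2·GCW(G₃) − 1`. -/
theorem stmt14 (n : ℕ) (g : (Fin n → Bool) → Bool)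
    (hodd : ∀ z : Fin n → Bool, g (fun i => !z i) = !g z) :
    GCWprob n 4 g = 2 * GCWprob n 3 g - 1 := by
  set beats : ProfileM n 4 → Fin 4 → Bool := fun x b => g (colM n 4 x 0 b)
  set P := 𝔼 y : ProfileM n 3,
    (if g (colM n 3 y 0 1) = true ∧ g (colM n 3 y 0 2) = true then 1 else 0 : ℝ)
  have h3 : GCWprob n 3 g = 3 * P := by
    simp [GCWprob_eq_mul_expect_isGCW g hodd 0, IsGCW, Fin.forall_fin_succ, P]
  have h4 : GCWprob n 4 g
      = 4 * 𝔼 x, if beats x 1 ∧ beats x 2 ∧ beats x 3 then 1 else 0 := by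
    simp [GCWprob_eq_mul_expect_isGCW g hodd 0, IsGCW, Fin.forall_fin_succ, beats]
  have hlose : 𝔼 x, (if beats x 1 = false ∧ beats x 2 = false ∧ beats x 3 = false then 1 else 0)
      = 𝔼 x, (if beats x 1 ∧ beats x 2 ∧ beats x 3 then 1 else 0 : ℝ) := by
    simpa [IsGCW, Fin.forall_fin_succ] using expect_isGCL_eq_expect_isGCW hodd (0 : Fin 4)
  have hpair (j k : Fin 4) (hjk : Injective ![0, j, k]) :
      𝔼 x, (if beats x j ∧ beats x k then 1 else 0 : ℝ) = P :=
    expect_colM_comp_injective_succ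
      (fun c => if g (c 0 1) = true ∧ g (c 0 2) = true then 1 else 0) hjk
  have hie := expect_ite_and_three (beats · 1) (beats · 2) (beats · 3)
  rw [hlose, expect_beats_eq_half hodd (by decide : (0 : Fin 4) ≠ 1),
    expect_beats_eq_half hodd (by decide : (0 : Fin 4) ≠ 2),
    expect_beats_eq_half hodd (by decide : (0 : Fin 4) ≠ 3),
    hpair 1 2 (by decide), hpair 1 3 (by decide), hpair 2 3 (by decide)] at hie
  rw [h4, h3]
  linarith
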